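/- arXiv:1104.2530 — 3 statements merged into one kernel-verified Lean document; each statement's English description precedes it below -/
import Mathlib

section
/- Let (A,B) be a pair of symmetric n×n complex matrices and let I_1, I_2 ⊆ {1,…,n}×{1,…,n} be symmetric sets of positions, with associated pattern space 𝒟(ℂ) := {(X,Y) ∈ Sym_n(ℂ)×Sym_n(ℂ) : X_{ij} = 0 for (i,j) ∉ I_1 and Y_{ij} = 0 for (i,j) ∉ I_2}. Then the following are equivalent: (i) the deformation (X,Y) ↦ (A+X, B+Y), parametrized by 𝒟(ℂ), is a miniversal deformation of (A,B); (ii) Sym_n(ℂ)×Sym_n(ℂ) = T(A,B) ⊕ 𝒟(ℂ) (direct sum of subspaces); (iii) every coset of T(A,B) in Sym_n(ℂ)×Sym_n(ℂ) contains exactly one element of 𝒟(ℂ). -/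
open Matrix Filter

noncomputable section

attribute [local instance] Matrix.normedAddCommGroup Matrix.normedSpace

/-- The space of pairs of symmetric `ι × ι` complex matrices, as a subspace of all pairs. -/
def SymPair (ι : Type) [Fintype ι] : Submodule ℂ (Matrix ι ι ℂ × Matrix ι ι ℂ) where
  carrier := {p | p.1.IsSymm ∧ p.2.IsSymm}
  add_mem' ha hb := ⟨ha.1.add hb.1, ha.2.add hb.2⟩
  zero_mem' := ⟨Matrix.isSymm_zero, Matrix.isSymm_zero⟩
  smul_mem' c p hp := ⟨hp.1.smul c, hp.2.smul c⟩

/-- The linear map `C ↦ (CᵀA + AC, CᵀB + BC)`. -/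
def congMap {ι : Type} [Fintype ι] (A B : Matrix ι ι ℂ) :
    Matrix ι ι ℂ →ₗ[ℂ] Matrix ι ι ℂ × Matrix ι ι ℂ where
  toFun C := (Cᵀ * A + A * C, Cᵀ * B + B * C)
  map_add' C D := by
    simp only [Matrix.transpose_add, Matrix.add_mul, Matrix.mul_add, Prod.mk_add_mk, Prod.ext_iff]
    constructor <;> abel
  map_smul' c C := by
    simp only [Matrix.transpose_smul, Matrix.smul_mul, Matrix.mul_smul, RingHom.id_apply,
      Prod.smul_mk, smul_add]

/-- `T(A,B) = {(CᵀA + AC, CᵀB + BC) : C}`, the tangent space to the congruence class. -/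
def TSpace {ι : Type} [Fintype ι] (A B : Matrix ι ι ℂ) :
    Submodule ℂ (Matrix ι ι ℂ × Matrix ι ι ℂ) :=
  LinearMap.range (congMap A B)

/-- The pattern space determined by two sets of positions: pairs of symmetric matrices
supported on `I1` resp. `I2`. -/
def Pattern {ι : Type} [Fintype ι] (I1 I2 : Set (ι × ι)) :
    Submodule ℂ (Matrix ι ι ℂ × Matrix ι ι ℂ) where
  carrier := {p | p.1.IsSymm ∧ p.2.IsSymm ∧ (∀ i j, (i, j) ∉ I1 → p.1 i j = 0) ∧
    (∀ i j, (i, j) ∉ I2 → p.2 i j = 0)}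
  add_mem' := by
    rintro a b ⟨ha1, ha2, ha3, ha4⟩ ⟨hb1, hb2, hb3, hb4⟩
    exact ⟨ha1.add hb1, ha2.add hb2,
      fun i j h => by show a.1 i j + b.1 i j = 0; rw [ha3 i j h, hb3 i j h, add_zero],
      fun i j h => by show a.2 i j + b.2 i j = 0; rw [ha4 i j h, hb4 i j h, add_zero]⟩
  zero_mem' := ⟨Matrix.isSymm_zero, Matrix.isSymm_zero, fun _ _ _ => rfl, fun _ _ _ => rfl⟩
  smul_mem' := by
    rintro c a ⟨ha1, ha2, ha3, ha4⟩
    exact ⟨ha1.smul c, ha2.smul c,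
      fun i j h => by show c * a.1 i j = 0; rw [ha3 i j h, mul_zero],
      fun i j h => by show c * a.2 i j = 0; rw [ha4 i j h, mul_zero]⟩

theorem Pattern_le {ι : Type} [Fintype ι] (I1 I2 : Set (ι × ι)) :
    Pattern I1 I2 ≤ SymPair ι := fun _ hp => ⟨hp.1, hp.2.1⟩

/-- A deformation of a pair `(A, B)` of symmetric `ι × ι` complex matrices, with parameter
space `P`: a map defined near `0 : P`, holomorphic at `0` (i.e. each matrix entry is an
analytic function of the parameter at `0`), taking values in pairs of symmetric matrices,
and sending `0` to `(A, B)`. -/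
structure Deformation (ι : Type) [Fintype ι] (P : Type*) [NormedAddCommGroup P]
    [NormedSpace ℂ P] (A B : Matrix ι ι ℂ) where
  map : P → Matrix ι ι ℂ × Matrix ι ι ℂ
  analytic₁ : ∀ i j, AnalyticAt ℂ (fun p => (map p).1 i j) 0
  analytic₂ : ∀ i j, AnalyticAt ℂ (fun p => (map p).2 i j) 0
  symm : ∀ᶠ p in nhds (0 : P), (map p).1.IsSymm ∧ (map p).2.IsSymm
  init : map 0 = (A, B)

/-- Two (maps underlying) deformations with the same parameter space are equivalent if
`g p = (I p)ᵀ • f p • (I p)` near `0`, for a family `I` of matrices holomorphic at `0`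
with `I 0 = 1`. -/
def DefEquiv {ι : Type} [Fintype ι] [DecidableEq ι] {P : Type*} [NormedAddCommGroup P]
    [NormedSpace ℂ P] (f g : P → Matrix ι ι ℂ × Matrix ι ι ℂ) : Prop :=
  ∃ I : P → Matrix ι ι ℂ, (∀ i j, AnalyticAt ℂ (fun p => I p i j) 0) ∧ I 0 = 1 ∧
    ∀ᶠ p in nhds (0 : P), g p = ((I p)ᵀ * (f p).1 * I p, (I p)ᵀ * (f p).2 * I p)

/-- A deformation is versal if every deformation of the same pair (with a finite-dimensional
parameter space) is equivalent to a holomorphic reparametrization of it. -/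
def IsVersal {ι : Type} [Fintype ι] [DecidableEq ι] {P : Type*} [NormedAddCommGroup P]
    [NormedSpace ℂ P] {A B : Matrix ι ι ℂ} (𝒜 : Deformation ι P A B) : Prop :=
  ∀ (Q : Type) (_ : NormedAddCommGroup Q), ∀ (_ : NormedSpace ℂ Q)
    (_ : FiniteDimensional ℂ Q) (ℬ : Deformation ι Q A B),
    ∃ φ : Q → P, AnalyticAt ℂ φ 0 ∧ φ 0 = 0 ∧
      DefEquiv (fun q => 𝒜.map (φ q)) ℬ.map

/-- A versal deformation is miniversal if its parameter space has the minimal possible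
dimension among versal deformations. -/
def IsMiniversal {ι : Type} [Fintype ι] [DecidableEq ι] {P : Type*} [NormedAddCommGroup P]
    [NormedSpace ℂ P] {A B : Matrix ι ι ℂ} (𝒜 : Deformation ι P A B) : Prop :=
  IsVersal 𝒜 ∧ ∀ (Q : Type) (_ : NormedAddCommGroup Q), ∀ (_ : NormedSpace ℂ Q)
    (_ : FiniteDimensional ℂ Q) (ℬ : Deformation ι Q A B),
    IsVersal ℬ → Module.finrank ℂ P ≤ Module.finrank ℂ Q

/-- Entry evaluation is analytic on a finite-dimensional parameter space of matrix pairs. -/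
theorem analyticAt_entry {ι : Type} [Fintype ι]
    (D : Submodule ℂ (Matrix ι ι ℂ × Matrix ι ι ℂ)) (i j : ι) :
    AnalyticAt ℂ (fun p : D => ((p : Matrix ι ι ℂ × Matrix ι ι ℂ)).1 i j) 0 ∧
    AnalyticAt ℂ (fun p : D => ((p : Matrix ι ι ℂ × Matrix ι ι ℂ)).2 i j) 0 := by
  constructor
  · let L : D →ₗ[ℂ] ℂ :=
      { toFun := fun p => (p : Matrix ι ι ℂ × Matrix ι ι ℂ).1 i j
        map_add' := fun x y => rfl
        map_smul' := fun c x => rfl }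
    exact (LinearMap.toContinuousLinearMap L).analyticAt 0
  · let L : D →ₗ[ℂ] ℂ :=
      { toFun := fun p => (p : Matrix ι ι ℂ × Matrix ι ι ℂ).2 i j
        map_add' := fun x y => rfl
        map_smul' := fun c x => rfl }
    exact (LinearMap.toContinuousLinearMap L).analyticAt 0

/-- The deformation `(X, Y) ↦ (A + X, B + Y)` of `(A, B)`, parametrized by a subspace `D`
of the space of pairs of symmetric matrices. -/
def patternDeformation {ι : Type} [Fintype ι] (A B : Matrix ι ι ℂ)
    (hA : A.IsSymm) (hB : B.IsSymm) (D : Submodule ℂ (Matrix ι ι ℂ × Matrix ι ι ℂ))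
    (hD : D ≤ SymPair ι) : Deformation ι D A B where
  map p := (A + (p : Matrix ι ι ℂ × Matrix ι ι ℂ).1, B + (p : Matrix ι ι ℂ × Matrix ι ι ℂ).2)
  analytic₁ i j := by
    have h := (analyticAt_entry D i j).1
    have : (fun p : D => (A + (p : Matrix ι ι ℂ × Matrix ι ι ℂ).1) i j)
        = fun p : D => A i j + (p : Matrix ι ι ℂ × Matrix ι ι ℂ).1 i j := rfl
    rw [this]
    exact analyticAt_const.add h
  analytic₂ i j := by
    have h := (analyticAt_entry D i j).2
    have : (fun p : D => (B + (p : Matrix ι ι ℂ × Matrix ι ι ℂ).2) i j)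
        = fun p : D => B i j + (p : Matrix ι ι ℂ × Matrix ι ι ℂ).2 i j := rfl
    rw [this]
    exact analyticAt_const.add h
  symm := Eventually.of_forall fun p =>
    ⟨hA.add (hD p.2).1, hB.add (hD p.2).2⟩
  init := by simp

end

noncomputable section

attribute [local instance] Matrix.normedAddCommGroup Matrix.normedSpace

open Topology

/-!
`T(A,B)` is the tangent space at `(A,B)` to the congruence orbit, and a deformation `𝒜` is versal
exactly when `T(A,B) + im d𝒜₀ ⊇ Sym × Sym`. Necessity: a versal `𝒜` reparametrizes and conjugates
into any line `t ↦ (A,B) + t v`; differentiating that equivalence at `0` writes `v` as a tangent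
vector plus a vector of `im d𝒜₀`. Sufficiency: `(C, p) ↦ (1 + C)ᵀ 𝒜(p) (1 + C)` then has
differential onto `Sym × Sym` at `0`, so by the analytic inverse function theorem (applied after
composing with a linear section) it has an analytic right inverse near `(A,B)`, which provides the
reparametrization and the congruence for every other deformation.

For `(X,Y) ↦ (A + X, B + Y)` on `𝒟` the differential is the inclusion of `𝒟`, so it is versal iff
`T(A,B) + 𝒟 = Sym × Sym`; every versal deformation has at least `codim T(A,B)` parameters, with
equality for `𝒟` exactly when the sum is direct. The coset statement is a reformulation of the
direct sum.
-/

theorem AnalyticAt.exists_analyticAt_rightInverse {𝕜 E F : Type*} [NontriviallyNormedField 𝕜]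
    [NormedAddCommGroup E] [NormedSpace 𝕜 E] [CompleteSpace E] [NormedAddCommGroup F]
    [NormedSpace 𝕜 F] {f : E → F} {a : E} (hf : AnalyticAt 𝕜 f a) {i : E ≃L[𝕜] F}
    (hf' : fderiv 𝕜 f a = i) :
    ∃ g : F → E, AnalyticAt 𝕜 g (f a) ∧ g (f a) = a ∧ ∀ᶠ y in 𝓝 (f a), f (g y) = y := by
  have hs : HasStrictFDerivAt f (i : E →L[𝕜] F) a := hf' ▸ hf.hasStrictFDerivAt
  exact ⟨hs.localInverse f i a,
    (hs.toOpenPartialHomeomorph f).analyticAt_symm' hs.mem_toOpenPartialHomeomorph_source hf hf',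
    hs.localInverse_apply_image, hs.eventually_right_inverse⟩

section LinearAlgebra

variable {K V W : Type*} [Field K] [AddCommGroup V] [Module K V] [AddCommGroup W] [Module K W]

theorem LinearMap.exists_comp_eq_subtype_of_le_range {f : W →ₗ[K] V} {S : Submodule K V}
    (h : S ≤ LinearMap.range f) : ∃ σ : S →ₗ[K] W, f ∘ₗ σ = S.subtype := by
  obtain ⟨g, hg⟩ := f.rangeRestrict.exists_rightInverse_of_surjective f.range_rangeRestrict
  exact ⟨g ∘ₗ Submodule.inclusion h, LinearMap.ext fun s =>
    congrArg Subtype.val (LinearMap.congr_fun hg (Submodule.inclusion h s))⟩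

theorem Submodule.exists_le_disjoint_sup_eq {T S : Submodule K V} (h : T ≤ S) :
    ∃ D ≤ S, Disjoint T D ∧ T ⊔ D = S := by
  obtain ⟨D₀, hD₀⟩ := T.exists_isCompl
  refine ⟨D₀ ⊓ S, inf_le_right, hD₀.disjoint.mono_right inf_le_left, ?_⟩
  rw [← sup_inf_assoc_of_le _ h, hD₀.codisjoint.eq_top, top_inf_eq]

end LinearAlgebra

theorem Submodule.disjoint_and_sup_eq_iff_existsUnique {R M : Type*} [Ring R] [AddCommGroup M]
    [Module R M] {T D S : Submodule R M} (hT : T ≤ S) (hD : D ≤ S) :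
    Disjoint T D ∧ T ⊔ D = S ↔ ∀ v ∈ S, ∃! d, d ∈ D ∧ v - d ∈ T := by
  constructor
  · rintro ⟨hdisj, hsup⟩ v hv
    rw [← hsup] at hv
    obtain ⟨t, ht, d, hd, rfl⟩ := Submodule.mem_sup.1 hv
    refine ⟨d, ⟨hd, by simpa using ht⟩, fun d' ⟨hd', hd'T⟩ => ?_⟩
    have hT' : d' - d ∈ T := by
      have h := T.sub_mem ht hd'T
      rwa [show t - (t + d - d') = d' - d by abel] at h
    exact sub_eq_zero.1 (Submodule.disjoint_def.1 hdisj _ hT' (D.sub_mem hd' hd))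
  · intro h
    refine ⟨Submodule.disjoint_def.2 fun x hxT hxD => ?_, le_antisymm (sup_le hT hD) fun v hv => ?_⟩
    · obtain ⟨d, -, huniq⟩ := h x (hD hxD)
      rw [huniq x ⟨hxD, by simp⟩, ← huniq 0 ⟨D.zero_mem, by simpa using hxT⟩]
    · obtain ⟨d, ⟨hd, hvd⟩, -⟩ := h v hv
      simpa using Submodule.add_mem_sup hvd hd

section MatrixCalculus

variable {ι : Type} [Fintype ι] {E : Type*} [NormedAddCommGroup E] [NormedSpace ℂ E] {x : E}

def Matrix.mulCLM : Matrix ι ι ℂ →L[ℂ] Matrix ι ι ℂ →L[ℂ] Matrix ι ι ℂ :=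
  (LinearMap.mul ℂ (Matrix ι ι ℂ)).toContinuousBilinearMap

def Matrix.transposeCLM : Matrix ι ι ℂ →L[ℂ] Matrix ι ι ℂ :=
  (transposeLinearEquiv ι ι ℂ ℂ).toLinearMap.toContinuousLinearMap

theorem AnalyticAt.matrix_apply {f : E → Matrix ι ι ℂ} (hf : AnalyticAt ℂ f x) (i j : ι) :
    AnalyticAt ℂ (fun y => f y i j) x :=
  analyticAt_pi_iff.1 (analyticAt_pi_iff.1 hf i) j

theorem AnalyticAt.matrix_mul {f g : E → Matrix ι ι ℂ} (hf : AnalyticAt ℂ f x)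
    (hg : AnalyticAt ℂ g x) : AnalyticAt ℂ (fun y => f y * g y) x :=
  (mulCLM.analyticAt_bilinear (f x, g x)).comp₂ hf hg

theorem AnalyticAt.matrix_transpose {f : E → Matrix ι ι ℂ} (hf : AnalyticAt ℂ f x) :
    AnalyticAt ℂ (fun y => (f y)ᵀ) x :=
  ((transposeCLM (ι := ι)).analyticAt (f x)).comp hf

variable [DecidableEq ι] {J Z : E → Matrix ι ι ℂ} {J' Z' : E →L[ℂ] Matrix ι ι ℂ}

theorem HasFDerivAt.transpose_mul_mul (hJ : HasFDerivAt J J' x) (hZ : HasFDerivAt Z Z' x)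
    (hJx : J x = 1) {L : E →L[ℂ] Matrix ι ι ℂ}
    (hL : ∀ v, L v = (J' v)ᵀ * Z x + Z' v + Z x * J' v) :
    HasFDerivAt (fun y => (J y)ᵀ * Z y * J y) L x := by
  have hJT : HasFDerivAt (fun y => (J y)ᵀ) (transposeCLM.comp J') x :=
    (transposeCLM (ι := ι)).hasFDerivAt.comp x hJ
  refine (mulCLM.hasFDerivAt_of_bilinear (mulCLM.hasFDerivAt_of_bilinear hJT hZ) hJ).congr_fderiv
    (ContinuousLinearMap.ext fun v => ?_)
  change (J x)ᵀ * Z x * J' v + ((J x)ᵀ * Z' v + (J' v)ᵀ * Z x) * J x = L v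
  simp only [hJx, hL, transpose_one, Matrix.one_mul, Matrix.mul_one]
  abel

end MatrixCalculus

section Congruence

variable {ι : Type} [Fintype ι]

def pairCongr (J : Matrix ι ι ℂ) (p : Matrix ι ι ℂ × Matrix ι ι ℂ) :
    Matrix ι ι ℂ × Matrix ι ι ℂ :=
  (Jᵀ * p.1 * J, Jᵀ * p.2 * J)

theorem pairCongr_mem_symPair (J : Matrix ι ι ℂ) {p : Matrix ι ι ℂ × Matrix ι ι ℂ}
    (hp : p ∈ SymPair ι) : pairCongr J p ∈ SymPair ι := by
  constructor <;> simp [pairCongr, IsSymm, transpose_mul, Matrix.mul_assoc, hp.1.eq, hp.2.eq]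

theorem TSpace_le_symPair {A B : Matrix ι ι ℂ} (hA : A.IsSymm) (hB : B.IsSymm) :
    TSpace A B ≤ SymPair ι := by
  rintro _ ⟨C, rfl⟩
  constructor <;> simp [congMap, IsSymm, transpose_mul, hA.eq, hB.eq, add_comm]

variable {E : Type*} [NormedAddCommGroup E] [NormedSpace ℂ E] {x : E}
  {J : E → Matrix ι ι ℂ} {Y : E → Matrix ι ι ℂ × Matrix ι ι ℂ}

theorem AnalyticAt.pairCongr (hJ : AnalyticAt ℂ J x) (hY : AnalyticAt ℂ Y x) :
    AnalyticAt ℂ (fun y => pairCongr (J y) (Y y)) x :=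
  ((hJ.matrix_transpose.matrix_mul (analyticAt_fst.comp hY)).matrix_mul hJ).prod
    ((hJ.matrix_transpose.matrix_mul (analyticAt_snd.comp hY)).matrix_mul hJ)

theorem HasFDerivAt.pairCongr [DecidableEq ι] {A B : Matrix ι ι ℂ} {J' : E →L[ℂ] Matrix ι ι ℂ}
    {Y' : E →L[ℂ] Matrix ι ι ℂ × Matrix ι ι ℂ} (hJ : HasFDerivAt J J' x) (hY : HasFDerivAt Y Y' x)
    (hJx : J x = 1) (hYx : Y x = (A, B)) :
    HasFDerivAt (fun y => pairCongr (J y) (Y y))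
      ((congMap A B).toContinuousLinearMap.comp J' + Y') x := by
  set L := (congMap A B).toContinuousLinearMap.comp J' + Y'
  have h₁ := hJ.transpose_mul_mul hY.fst hJx (L := (ContinuousLinearMap.fst ℂ _ _).comp L)
    fun v => by simp [L, congMap, hYx]; abel
  have h₂ := hJ.transpose_mul_mul hY.snd hJx (L := (ContinuousLinearMap.snd ℂ _ _).comp L)
    fun v => by simp [L, congMap, hYx]; abel
  exact (h₁.prodMk h₂).congr_fderiv (ContinuousLinearMap.ext fun _ => rfl)

end Congruence

section Deformation

variable {ι : Type} [Fintype ι] {A B : Matrix ι ι ℂ}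
  {P : Type*} [NormedAddCommGroup P] [NormedSpace ℂ P]

namespace Deformation

variable (𝒜 : Deformation ι P A B)

theorem analyticAt : AnalyticAt ℂ 𝒜.map 0 :=
  (AnalyticAt.pi fun i => .pi fun j => 𝒜.analytic₁ i j).prod
    (AnalyticAt.pi fun i => .pi fun j => 𝒜.analytic₂ i j)

theorem hasFDerivAt : HasFDerivAt 𝒜.map (fderiv ℂ 𝒜.map 0) 0 :=
  𝒜.analyticAt.differentiableAt.hasFDerivAt

theorem tendsto : Tendsto 𝒜.map (𝓝 0) (𝓝 (A, B)) :=
  𝒜.init ▸ 𝒜.analyticAt.continuousAt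

variable [DecidableEq ι]

def congrOrbitMap (q : Matrix ι ι ℂ × P) : Matrix ι ι ℂ × Matrix ι ι ℂ :=
  pairCongr (1 + q.1) (𝒜.map q.2)

theorem analyticAt_congrOrbitMap : AnalyticAt ℂ 𝒜.congrOrbitMap 0 := by
  have hC : AnalyticAt ℂ (fun q : Matrix ι ι ℂ × P => 1 + q.1) 0 :=
    analyticAt_const.add analyticAt_fst
  have hp : AnalyticAt ℂ (fun q : Matrix ι ι ℂ × P => 𝒜.map q.2) 0 :=
    𝒜.analyticAt.comp (f := Prod.snd) analyticAt_snd
  exact hC.pairCongr hp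

theorem hasFDerivAt_congrOrbitMap :
    HasFDerivAt 𝒜.congrOrbitMap
      ((congMap A B).toContinuousLinearMap.coprod (fderiv ℂ 𝒜.map 0)) 0 := by
  have hC : HasFDerivAt (fun q : Matrix ι ι ℂ × P => 1 + q.1) (.fst ℂ _ _) 0 :=
    hasFDerivAt_fst.const_add 1
  have hp : HasFDerivAt (fun q : Matrix ι ι ℂ × P => 𝒜.map q.2)
      ((fderiv ℂ 𝒜.map 0).comp (.snd ℂ _ _)) 0 :=
    𝒜.hasFDerivAt.comp 0 hasFDerivAt_snd
  exact (hC.pairCongr hp (add_zero 1) 𝒜.init).congr_fderiv (ContinuousLinearMap.ext fun _ => rfl)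

theorem eventually_congrOrbitMap_mem : ∀ᶠ q in 𝓝 0, 𝒜.congrOrbitMap q ∈ SymPair ι :=
  (continuous_snd.tendsto (0 : Matrix ι ι ℂ × P)).eventually 𝒜.symm |>.mono
    fun _ hq => pairCongr_mem_symPair _ hq

theorem congrOrbitMap_zero : 𝒜.congrOrbitMap 0 = (A, B) := by
  simp [congrOrbitMap, pairCongr, 𝒜.init]

theorem exists_analyticAt_congrOrbitMap_rightInverse
    (h : SymPair ι ≤ TSpace A B ⊔ LinearMap.range (fderiv ℂ 𝒜.map 0 : P →ₗ[ℂ] _)) :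
    ∃ ψ : Matrix ι ι ℂ × Matrix ι ι ℂ → Matrix ι ι ℂ × P, AnalyticAt ℂ ψ (A, B) ∧
      ψ (A, B) = 0 ∧ ∀ᶠ v in 𝓝 (A, B), v ∈ SymPair ι → 𝒜.congrOrbitMap (ψ v) = v := by
  set Φ := (congMap A B).toContinuousLinearMap.coprod (fderiv ℂ 𝒜.map 0)
  obtain ⟨σ, hσ⟩ := LinearMap.exists_comp_eq_subtype_of_le_range (S := SymPair ι)
    (f := (congMap A B).coprod (fderiv ℂ 𝒜.map 0 : P →ₗ[ℂ] _)) (by rwa [LinearMap.range_coprod])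
  let σc := LinearMap.toContinuousLinearMap σ
  -- The inverse function theorem is applied on `Sym × Sym`, via a linear projection onto it.
  obtain ⟨S', hS'⟩ := (SymPair ι).exists_isCompl
  let π := ((SymPair ι).projectionOnto S' hS').toContinuousLinearMap
  have hπ : ∀ v ∈ SymPair ι, (π v : Matrix ι ι ℂ × Matrix ι ι ℂ) = v := fun v hv =>
    congrArg Subtype.val (Submodule.projectionOnto_apply_left hS' ⟨v, hv⟩)
  let G := fun s => π (𝒜.congrOrbitMap (σc s))
  have hG0 : G 0 = π (A, B) := by simp [G, congrOrbitMap_zero]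
  have hGa : AnalyticAt ℂ G 0 :=
    (π.analyticAt _).comp ((σc.map_zero ▸ 𝒜.analyticAt_congrOrbitMap).comp (σc.analyticAt 0))
  have hGd : HasFDerivAt G (π.comp (Φ.comp σc)) 0 :=
    π.hasFDerivAt.comp 0 ((σc.map_zero ▸ 𝒜.hasFDerivAt_congrOrbitMap).comp 0 σc.hasFDerivAt)
  have hGd' : fderiv ℂ G 0 = ContinuousLinearEquiv.refl ℂ (SymPair ι) := by
    refine hGd.fderiv.trans (ContinuousLinearMap.ext fun s => Subtype.ext ?_)
    change (π (Φ (σ s)) : Matrix ι ι ℂ × Matrix ι ι ℂ) = s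
    rw [show Φ (σ s) = s from LinearMap.congr_fun hσ s, hπ _ s.2]
  obtain ⟨H, hHa, hH0, hGH⟩ := hGa.exists_analyticAt_rightInverse hGd'
  rw [hG0] at hHa hH0 hGH
  let ψ := fun v => σc (H (π v))
  have hψa : AnalyticAt ℂ ψ (A, B) := (σc.analyticAt _).comp (hHa.comp (π.analyticAt _))
  have hψ0 : ψ (A, B) = 0 := by simp [ψ, hH0]
  refine ⟨ψ, hψa, hψ0, ?_⟩
  have hsym : ∀ᶠ v in 𝓝 (A, B), 𝒜.congrOrbitMap (ψ v) ∈ SymPair ι :=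
    (hψ0 ▸ hψa.continuousAt.tendsto).eventually 𝒜.eventually_congrOrbitMap_mem
  filter_upwards [(π.continuous.tendsto (A, B)).eventually hGH, hsym] with v hGHv hv' hv
  calc 𝒜.congrOrbitMap (ψ v) = π (𝒜.congrOrbitMap (ψ v)) := (hπ _ hv').symm
    _ = π v := congrArg Subtype.val hGHv
    _ = v := hπ v hv

theorem isVersal_of_le_sup
    (h : SymPair ι ≤ TSpace A B ⊔ LinearMap.range (fderiv ℂ 𝒜.map 0 : P →ₗ[ℂ] _)) :
    IsVersal 𝒜 := by
  obtain ⟨ψ, hψa, hψ0, hψ⟩ := 𝒜.exists_analyticAt_congrOrbitMap_rightInverse h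
  intro Q _ _ _ ℬ
  have hψℬ : AnalyticAt ℂ (fun q => ψ (ℬ.map q)) 0 := (ℬ.init ▸ hψa).comp ℬ.analyticAt
  refine ⟨fun q => (ψ (ℬ.map q)).2, analyticAt_snd.comp hψℬ, by simp [ℬ.init, hψ0],
    fun q => 1 + (ψ (ℬ.map q)).1, fun i j => ?_, by simp [ℬ.init, hψ0], ?_⟩
  · exact (analyticAt_const.add (analyticAt_fst.comp hψℬ)).matrix_apply i j
  · filter_upwards [ℬ.tendsto.eventually hψ, ℬ.symm] with q hq hsymm
    exact (hq hsymm).symm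

end Deformation

def lineDeformation (hA : A.IsSymm) (hB : B.IsSymm) (v : Matrix ι ι ℂ × Matrix ι ι ℂ)
    (hv : v ∈ SymPair ι) : Deformation ι ℂ A B where
  map t := (A, B) + t • v
  analytic₁ i j := analyticAt_const.add (analyticAt_id.mul analyticAt_const)
  analytic₂ i j := analyticAt_const.add (analyticAt_id.mul analyticAt_const)
  symm := .of_forall fun t => (SymPair ι).add_mem ⟨hA, hB⟩ ((SymPair ι).smul_mem t hv)
  init := by simp

variable [DecidableEq ι]

theorem IsVersal.symPair_le_sup (hA : A.IsSymm) (hB : B.IsSymm) {𝒜 : Deformation ι P A B}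
    (h𝒜 : IsVersal 𝒜) :
    SymPair ι ≤ TSpace A B ⊔ LinearMap.range (fderiv ℂ 𝒜.map 0 : P →ₗ[ℂ] _) := by
  intro v hv
  obtain ⟨φ, hφ, hφ0, I, hI, hI0, hequiv⟩ := h𝒜 ℂ inferInstance inferInstance inferInstance
    (lineDeformation hA hB v hv)
  have hI' : HasFDerivAt I (fderiv ℂ I 0) 0 :=
    (AnalyticAt.pi fun i => .pi fun j => hI i j).differentiableAt.hasFDerivAt
  have h𝒜φ : HasFDerivAt (fun t => 𝒜.map (φ t)) ((fderiv ℂ 𝒜.map 0).comp (fderiv ℂ φ 0)) 0 :=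
    (hφ0 ▸ 𝒜.hasFDerivAt : HasFDerivAt 𝒜.map (fderiv ℂ 𝒜.map 0) (φ 0)).comp 0
      hφ.differentiableAt.hasFDerivAt
  have hrhs := (hI'.pairCongr h𝒜φ hI0 (by rw [hφ0, 𝒜.init])).hasDerivAt
  have hlhs : HasDerivAt (lineDeformation hA hB v hv).map v 0 := by
    have h := ((hasDerivAt_id (0 : ℂ)).smul_const v).const_add (A, B)
    rwa [one_smul] at h
  rw [hlhs.unique (hrhs.congr_of_eventuallyEq hequiv)]
  exact Submodule.add_mem_sup ⟨_, rfl⟩ ⟨_, rfl⟩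

end Deformation

section PatternDeformation

variable {ι : Type} [Fintype ι] [DecidableEq ι] {A B : Matrix ι ι ℂ}

theorem Deformation.isVersal_iff (hA : A.IsSymm) (hB : B.IsSymm) {P : Type*}
    [NormedAddCommGroup P] [NormedSpace ℂ P] {𝒜 : Deformation ι P A B}
    {L : P →L[ℂ] Matrix ι ι ℂ × Matrix ι ι ℂ} (hL : HasFDerivAt 𝒜.map L 0) :
    IsVersal 𝒜 ↔ SymPair ι ≤ TSpace A B ⊔ LinearMap.range (L : P →ₗ[ℂ] _) := by
  rw [← hL.fderiv]
  exact ⟨fun h => h.symPair_le_sup hA hB, 𝒜.isVersal_of_le_sup⟩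

theorem IsVersal.finrank_symPair_le (hA : A.IsSymm) (hB : B.IsSymm) {Q : Type*}
    [NormedAddCommGroup Q] [NormedSpace ℂ Q] [FiniteDimensional ℂ Q] {ℬ : Deformation ι Q A B}
    (h : IsVersal ℬ) :
    Module.finrank ℂ (SymPair ι) ≤ Module.finrank ℂ (TSpace A B) + Module.finrank ℂ Q :=
  calc Module.finrank ℂ (SymPair ι)
      ≤ Module.finrank ℂ ↥(TSpace A B ⊔ LinearMap.range (fderiv ℂ ℬ.map 0 : Q →ₗ[ℂ] _)) :=
        Submodule.finrank_mono (h.symPair_le_sup hA hB)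
    _ ≤ _ := Submodule.finrank_add_le_finrank_add_finrank _ _
    _ ≤ _ := by gcongr; exact LinearMap.finrank_range_le _

theorem isVersal_patternDeformation_iff (hA : A.IsSymm) (hB : B.IsSymm)
    {D : Submodule ℂ (Matrix ι ι ℂ × Matrix ι ι ℂ)} (hD : D ≤ SymPair ι) :
    IsVersal (patternDeformation A B hA hB D hD) ↔ TSpace A B ⊔ D = SymPair ι := by
  have hderiv : HasFDerivAt (patternDeformation A B hA hB D hD).map D.subtypeL 0 :=
    D.subtypeL.hasFDerivAt.const_add (A, B)
  have hsup : SymPair ι ≤ TSpace A B ⊔ D ↔ TSpace A B ⊔ D = SymPair ι :=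
    ⟨le_antisymm (sup_le (TSpace_le_symPair hA hB) hD), fun h => h.ge⟩
  rw [Deformation.isVersal_iff hA hB hderiv]
  -- The two instance paths on `↥D` (as a submodule, as a normed space) agree only up to unfolding.
  convert hsup using 4
  exact D.range_subtype

theorem isMiniversal_patternDeformation_iff (hA : A.IsSymm) (hB : B.IsSymm)
    {D : Submodule ℂ (Matrix ι ι ℂ × Matrix ι ι ℂ)} (hD : D ≤ SymPair ι) :
    IsMiniversal (patternDeformation A B hA hB D hD) ↔
      Disjoint (TSpace A B) D ∧ TSpace A B ⊔ D = SymPair ι := by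
  have hdim := Submodule.finrank_sup_add_finrank_inf_eq (TSpace A B) D
  rw [IsMiniversal, isVersal_patternDeformation_iff]
  constructor
  · rintro ⟨hsup, hmin⟩
    obtain ⟨D', hD', hdisj', hsup'⟩ := Submodule.exists_le_disjoint_sup_eq (TSpace_le_symPair hA hB)
    have hle := hmin D' inferInstance inferInstance inferInstance
      (patternDeformation A B hA hB D' hD') ((isVersal_patternDeformation_iff hA hB hD').2 hsup')
    have hdim' := Submodule.finrank_sup_add_finrank_inf_eq (TSpace A B) D'
    rw [hsup', hdisj'.eq_bot, finrank_bot] at hdim'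
    rw [hsup] at hdim
    refine ⟨disjoint_iff.2 (Submodule.finrank_eq_zero.1 (by omega)), hsup⟩
  · rintro ⟨hdisj, hsup⟩
    refine ⟨hsup, fun Q _ _ _ ℬ hℬ => ?_⟩
    have := hℬ.finrank_symPair_le hA hB
    rw [hsup, hdisj.eq_bot, finrank_bot] at hdim
    omega

end PatternDeformation

theorem miniversal_iff_direct_sum_iff_cosets_general {n : ℕ} (A B : Matrix (Fin n) (Fin n) ℂ)
    (hA : A.IsSymm) (hB : B.IsSymm) (I1 I2 : Set (Fin n × Fin n)) :
    (IsMiniversal (patternDeformation A B hA hB (Pattern I1 I2) (Pattern_le I1 I2)) ↔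
      (Disjoint (TSpace A B) (Pattern I1 I2) ∧
        TSpace A B ⊔ Pattern I1 I2 = SymPair (Fin n))) ∧
    ((Disjoint (TSpace A B) (Pattern I1 I2) ∧
        TSpace A B ⊔ Pattern I1 I2 = SymPair (Fin n)) ↔
      (∀ v ∈ SymPair (Fin n), ∃! d, d ∈ Pattern I1 I2 ∧ v - d ∈ TSpace A B)) :=
  ⟨isMiniversal_patternDeformation_iff hA hB (Pattern_le I1 I2),
    Submodule.disjoint_and_sup_eq_iff_existsUnique (TSpace_le_symPair hA hB) (Pattern_le I1 I2)⟩

/-- **Lemma (miniversality criterion).** For a pair `(A,B)` of symmetric `n × n` complex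
matrices and symmetric sets of positions `I1, I2`, the following are equivalent:
(i) the deformation `(X,Y) ↦ (A+X, B+Y)` parametrized by the pattern space `𝒟(ℂ)` is
miniversal; (ii) `Sym×Sym = T(A,B) ⊕ 𝒟(ℂ)`; (iii) every coset of `T(A,B)` in `Sym×Sym`
contains exactly one element of `𝒟(ℂ)`. -/
theorem miniversal_iff_direct_sum_iff_cosets {n : ℕ} (A B : Matrix (Fin n) (Fin n) ℂ)
    (hA : A.IsSymm) (hB : B.IsSymm) (I1 I2 : Set (Fin n × Fin n))
    (hI1 : ∀ i j : Fin n, (i, j) ∈ I1 ↔ (j, i) ∈ I1)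
    (hI2 : ∀ i j : Fin n, (i, j) ∈ I2 ↔ (j, i) ∈ I2) :
    (IsMiniversal (patternDeformation A B hA hB (Pattern I1 I2) (Pattern_le I1 I2)) ↔
      (Disjoint (TSpace A B) (Pattern I1 I2) ∧
        TSpace A B ⊔ Pattern I1 I2 = SymPair (Fin n))) ∧
    ((Disjoint (TSpace A B) (Pattern I1 I2) ∧
        TSpace A B ⊔ Pattern I1 I2 = SymPair (Fin n)) ↔
      (∀ v ∈ SymPair (Fin n), ∃! d, d ∈ Pattern I1 I2 ∧ v - d ∈ TSpace A B)) :=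
  miniversal_iff_direct_sum_iff_cosets_general A B hA hB I1 I2

end
end

section
/- For every positive integer n, the space Sym_n(ℂ)×Sym_n(ℂ) is the direct sum of the subspace T(Λ_n(0), Δ_n) and the subspace P := { (X, 0) : X ∈ Sym_n(ℂ), X_{ij} = 0 whenever |i−j| > 1 or i+j > n+1 }. -/
open Matrix

noncomputable section

/-- `Λ_n(λ)`: the `n × n` matrix with `(i,j)` entry `λ` if `i + j = n + 1`, `1` if
`i + j = n + 2`, and `0` otherwise (1-based indices). -/
def lamM (n : ℕ) (lam : ℂ) : Matrix (Fin n) (Fin n) ℂ :=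
  Matrix.of fun i j =>
    if (i : ℕ) + 1 + ((j : ℕ) + 1) = n + 1 then lam
    else if (i : ℕ) + 1 + ((j : ℕ) + 1) = n + 2 then 1 else 0

/-- `Δ_n`: the `n × n` matrix with `(i,j)` entry `1` if `i + j = n + 1` and `0`
otherwise (1-based indices). -/
def delM (n : ℕ) : Matrix (Fin n) (Fin n) ℂ :=
  Matrix.of fun i j => if (i : ℕ) + 1 + ((j : ℕ) + 1) = n + 1 then 1 else 0

/-- `F_n`: the `n × (n+1)` matrix with `F_n(i,j) = 1` exactly when `j = i`. -/
def FM (n : ℕ) : Matrix (Fin n) (Fin (n + 1)) ℂ :=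
  Matrix.of fun i j => if (j : ℕ) = (i : ℕ) then 1 else 0

/-- `G_n`: the `n × (n+1)` matrix with `G_n(i,j) = 1` exactly when `j = i + 1`. -/
def GM (n : ℕ) : Matrix (Fin n) (Fin (n + 1)) ℂ :=
  Matrix.of fun i j => if (j : ℕ) = (i : ℕ) + 1 then 1 else 0

/-- `L_n^{(1)} = [[0, F_nᵀ], [F_n, 0]]`, a symmetric `(2n+1) × (2n+1)` matrix. -/
def L1M (n : ℕ) : Matrix (Fin (2 * n + 1)) (Fin (2 * n + 1)) ℂ :=
  Matrix.reindex (finSumFinEquiv.trans (finCongr (by omega)))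
    (finSumFinEquiv.trans (finCongr (by omega)))
    (Matrix.fromBlocks 0 (FM n)ᵀ (FM n) 0)

/-- `L_n^{(2)} = [[0, G_nᵀ], [G_n, 0]]`, a symmetric `(2n+1) × (2n+1)` matrix. -/
def L2M (n : ℕ) : Matrix (Fin (2 * n + 1)) (Fin (2 * n + 1)) ℂ :=
  Matrix.reindex (finSumFinEquiv.trans (finCongr (by omega)))
    (finSumFinEquiv.trans (finCongr (by omega)))
    (Matrix.fromBlocks 0 (GM n)ᵀ (GM n) 0)

theorem lamM_isSymm (n : ℕ) (lam : ℂ) : (lamM n lam).IsSymm := by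
  unfold Matrix.IsSymm lamM
  ext i j
  simp only [Matrix.transpose_apply, Matrix.of_apply]
  split_ifs <;> first | rfl | omega

theorem delM_isSymm (n : ℕ) : (delM n).IsSymm := by
  unfold Matrix.IsSymm delM
  ext i j
  simp only [Matrix.transpose_apply, Matrix.of_apply]
  split_ifs <;> first | rfl | omega

theorem L1M_isSymm (n : ℕ) : (L1M n).IsSymm := by
  unfold Matrix.IsSymm L1M
  rw [Matrix.transpose_reindex, Matrix.fromBlocks_transpose]
  simp

theorem L2M_isSymm (n : ℕ) : (L2M n).IsSymm := by
  unfold Matrix.IsSymm L2M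
  rw [Matrix.transpose_reindex, Matrix.fromBlocks_transpose]
  simp

/-- The type of canonical summands: `H_k(λ)`, `K_k`, `L_k`. -/
inductive CanType where
  | H : ℕ → ℂ → CanType
  | K : ℕ → CanType
  | L : ℕ → CanType

/-- The size of a canonical pair. -/
def CanType.size : CanType → ℕ
  | .H k _ => k
  | .K k => k
  | .L k => 2 * k + 1

/-- The size parameter of a canonical pair. -/
def CanType.param : CanType → ℕ
  | .H k _ => k
  | .K k => k
  | .L k => k

/-- The first matrix of a canonical pair. -/
def CanType.A : (c : CanType) → Matrix (Fin c.size) (Fin c.size) ℂ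
  | .H k _ => delM k
  | .K k => lamM k 0
  | .L k => L1M k

/-- The second matrix of a canonical pair. -/
def CanType.B : (c : CanType) → Matrix (Fin c.size) (Fin c.size) ℂ
  | .H k lam => lamM k lam
  | .K k => delM k
  | .L k => L2M k

/-- Congruence of pairs of square complex matrices (over possibly different index
types): `(A', B') = (Sᵀ A S, Sᵀ B S)` for some invertible `S`. -/
def CongruentPairs {ι κ : Type} [Fintype ι] [Fintype κ] [DecidableEq ι] [DecidableEq κ]
    (p : Matrix ι ι ℂ × Matrix ι ι ℂ) (q : Matrix κ κ ℂ × Matrix κ κ ℂ) : Prop :=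
  ∃ S : Matrix ι κ ℂ, (∃ T : Matrix κ ι ℂ, S * T = 1 ∧ T * S = 1) ∧
    q.1 = Sᵀ * p.1 * S ∧ q.2 = Sᵀ * p.2 * S

end

/-!
Write `D = C Δ_n`, the matrix `C` with reversed columns. Up to reversing both indices, the second
component of `(CᵀΛ_n(0) + Λ_n(0) C, CᵀΔ_n + Δ_n C)` is `D + Dᵀ` and the first has entries
`D (a+1) b + D (b+1) a`. If the pair lies in `P`, then `D` is skew and, by skewness, every entry
of the first component off the band says that `D` takes equal values at two neighbouring positions
of an antidiagonal. On the short antidiagonals all these links are present, so `D` is constant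
there, and skewness (which reverses each antidiagonal) makes it zero; on the long ones only the
links across the middle are missing, and the outer ones lead to the zero entries beyond the
matrix. Hence `C = 0`: the map `C ↦ (CᵀΛ_n(0) + Λ_n(0) C, CᵀΔ_n + Δ_n C)` is injective and its
image `T` meets `P` only in `0`, so `T ⊕ P` fills `Sym_n × Sym_n` as
`dim T + dim P = n² + n = dim (Sym_n × Sym_n)`.
-/

open Matrix Module

/-- By skewness, `link` says `d (a + 1) b = d a (b + 1)`: `d` is constant along each antidiagonal,
except across the middle of the antidiagonals of index `≥ n`. -/
structure SkewLinked {G : Type*} [AddCommGroup G] (n : ℕ) (d : ℕ → ℕ → G) : Prop where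
  row_eq_zero : ∀ a b, n ≤ a → d a b = 0
  skew : ∀ a b, d a b = -d b a
  link : ∀ a b, a < n → b < n → (a + 2 ≤ b ∨ b + 2 ≤ a ∨ a + b + 2 ≤ n) →
    d (a + 1) b + d (b + 1) a = 0

namespace SkewLinked

variable {G : Type*} [AddCommGroup G] {n : ℕ} {d : ℕ → ℕ → G}

theorem eq_neg_of_link (h : SkewLinked n d) {a b : ℕ} (ha : a < n) (hb : b < n)
    (hab : a + 2 ≤ b ∨ b + 2 ≤ a ∨ a + b + 2 ≤ n) : d (a + 1) b = d a (b + 1) := by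
  rw [← neg_neg (d a (b + 1)), ← h.skew, ← sub_eq_zero, sub_neg_eq_add]
  exact h.link a b ha hb hab

/-- Walk outwards along the antidiagonal until the second index reaches `n`. -/
theorem eq_zero_of_lt_of_le_add (h : SkewLinked n d) {a b : ℕ} (hab : a < b) (hn : n ≤ a + b) :
    d a b = 0 := by
  induction a generalizing b with
  | zero => rw [h.skew, h.row_eq_zero b 0 (by omega), neg_zero]
  | succ a ih =>
    by_cases hb : b < n
    · rw [h.eq_neg_of_link (by omega) hb (by omega)]
      exact ih (by omega) (by omega)
    · rw [h.skew, h.row_eq_zero b _ (by omega), neg_zero]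

variable [IsAddTorsionFree G]

theorem apply_self (h : SkewLinked n d) (a : ℕ) : d a a = 0 :=
  self_eq_neg.mp (h.skew a a)

/-- On the remaining antidiagonals every link is present: walk inwards to the diagonal. -/
theorem eq_zero_of_le (h : SkewLinked n d) {a b : ℕ} (hab : a ≤ b) : d a b = 0 := by
  induction hk : b - a using Nat.strong_induction_on generalizing a b with
  | _ k ih =>
    rcases (by omega : a = b ∨ (a < b ∧ n ≤ a + b) ∨ (b = a + 1 ∧ a + b < n) ∨
        (a + 2 ≤ b ∧ a + b < n)) with rfl | hlt | ⟨rfl, hsum⟩ | ⟨hgap, hsum⟩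
    · exact h.apply_self a
    · exact h.eq_zero_of_lt_of_le_add hlt.1 hlt.2
    · have hlink := h.eq_neg_of_link (a := a) (b := a) (by omega) (by omega) (by omega)
      exact self_eq_neg.mp (by rw [← h.skew (a + 1) a, hlink])
    · have hlink := h.eq_neg_of_link (a := a) (b := b - 1) (by omega) (by omega) (by omega)
      rw [Nat.sub_add_cancel (by omega)] at hlink
      rw [← hlink]
      exact ih (b - 1 - (a + 1)) (by omega) (by omega) rfl

theorem eq_zero (h : SkewLinked n d) (a b : ℕ) : d a b = 0 := by
  rcases le_total a b with hab | hba
  · exact h.eq_zero_of_le hab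
  · rw [h.skew, h.eq_zero_of_le hba, neg_zero]

end SkewLinked

def natEntry {R : Type*} [Zero R] {n : ℕ} (M : Matrix (Fin n) (Fin n) R) (a b : ℕ) : R :=
  if h : a < n ∧ b < n then M ⟨a, h.1⟩ ⟨b, h.2⟩ else 0

section NatEntry

variable {R : Type*} {n : ℕ}

@[simp]
theorem natEntry_val [Zero R] (M : Matrix (Fin n) (Fin n) R) (i j : Fin n) :
    natEntry M i j = M i j := by
  simp [natEntry]

theorem natEntry_of_le [Zero R] (M : Matrix (Fin n) (Fin n) R) {a : ℕ} (b : ℕ) (ha : n ≤ a) :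
    natEntry M a b = 0 := by
  simp [natEntry, show ¬a < n by omega]

theorem natEntry_submatrix_rev [Zero R] (M : Matrix (Fin n) (Fin n) R) (a : ℕ) (j : Fin n) :
    natEntry (M.submatrix id Fin.rev) a j = natEntry M a j.rev := by
  simp only [natEntry, Fin.is_lt, and_true, submatrix_apply, id_eq]

theorem sum_ite_val_eq_natEntry [AddCommMonoid R] (M : Matrix (Fin n) (Fin n) R) (a : ℕ)
    (j : Fin n) : ∑ k : Fin n, (if (k : ℕ) = a then M k j else 0) = natEntry M a j := by
  by_cases ha : a < n
  · rw [Finset.sum_eq_single ⟨a, ha⟩ (fun k _ hk => if_neg fun h => hk (Fin.ext h))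
      (fun h => absurd (Finset.mem_univ _) h)]
    simp [natEntry, ha]
  · rw [natEntry_of_le M j (by omega)]
    exact Finset.sum_eq_zero fun k _ => if_neg (by omega)

end NatEntry

section Entries

variable {n : ℕ} (C : Matrix (Fin n) (Fin n) ℂ)

theorem lamM_zero_apply (i j : Fin n) : lamM n 0 i j = if (i : ℕ) = n - j then 1 else 0 := by
  simp only [lamM, of_apply]
  split_ifs <;> first | rfl | omega

theorem delM_apply (i j : Fin n) : delM n i j = if i = j.rev then 1 else 0 := by
  simp only [delM, of_apply, Fin.ext_iff, Fin.val_rev]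
  split_ifs <;> first | rfl | omega

theorem transpose_mul_lamM_zero_apply (i j : Fin n) :
    (Cᵀ * lamM n 0) i j = natEntry C (n - j) i := by
  simp only [mul_apply, transpose_apply, lamM_zero_apply, mul_ite, mul_one, mul_zero]
  exact sum_ite_val_eq_natEntry C _ i

theorem lamM_zero_mul_apply (i j : Fin n) : (lamM n 0 * C) i j = natEntry C (n - i) j := by
  rw [← transpose_apply (lamM n 0 * C), transpose_mul, (lamM_isSymm n 0).eq,
    transpose_mul_lamM_zero_apply]

theorem transpose_mul_delM_apply (i j : Fin n) : (Cᵀ * delM n) i j = C j.rev i := by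
  simp [mul_apply, delM_apply]

theorem delM_mul_apply (i j : Fin n) : (delM n * C) i j = C i.rev j := by
  rw [← transpose_apply (delM n * C), transpose_mul, (delM_isSymm n).eq,
    transpose_mul_delM_apply]

theorem congMap_fst_rev_apply (u v : Fin n) :
    (congMap (lamM n 0) (delM n) C).1 u.rev v.rev =
      natEntry (C.submatrix id Fin.rev) (v + 1) u +
        natEntry (C.submatrix id Fin.rev) (u + 1) v := by
  have hu := u.isLt
  have hv := v.isLt
  simp only [congMap, LinearMap.coe_mk, AddHom.coe_mk, Matrix.add_apply,
    transpose_mul_lamM_zero_apply, lamM_zero_mul_apply, natEntry_submatrix_rev, Fin.val_rev]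
  rw [show n - (n - (v + 1)) = v + 1 by omega, show n - (n - (u + 1)) = u + 1 by omega]

theorem congMap_snd_rev_apply (u v : Fin n) :
    (congMap (lamM n 0) (delM n) C).2 u.rev v.rev =
      C.submatrix id Fin.rev v u + C.submatrix id Fin.rev u v := by
  simp [congMap, transpose_mul_delM_apply, delM_mul_apply]

end Entries

def bandSet (n : ℕ) : Set (Fin n × Fin n) :=
  {pq : Fin n × Fin n | ((pq.1 : ℕ) ≤ (pq.2 : ℕ) + 1 ∧ (pq.2 : ℕ) ≤ (pq.1 : ℕ) + 1) ∧
    (pq.1 : ℕ) + 1 + ((pq.2 : ℕ) + 1) ≤ n + 1}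

theorem mem_Pattern_iff {ι : Type} [Fintype ι] {I1 I2 : Set (ι × ι)}
    {p : Matrix ι ι ℂ × Matrix ι ι ℂ} :
    p ∈ Pattern I1 I2 ↔ p.1.IsSymm ∧ p.2.IsSymm ∧ (∀ i j, (i, j) ∉ I1 → p.1 i j = 0) ∧
      (∀ i j, (i, j) ∉ I2 → p.2 i j = 0) :=
  Iff.rfl

theorem skewLinked_of_congMap_mem_pattern {n : ℕ} {C : Matrix (Fin n) (Fin n) ℂ}
    (hC : congMap (lamM n 0) (delM n) C ∈ Pattern (bandSet n) ∅) :
    SkewLinked n (natEntry (C.submatrix id Fin.rev)) := by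
  obtain ⟨-, -, hfst, hsnd⟩ := mem_Pattern_iff.mp hC
  refine ⟨fun a b ha => natEntry_of_le _ b ha, fun a b => ?_, fun a b ha hb hab => ?_⟩
  · by_cases hab : a < n ∧ b < n
    · have h := hsnd (Fin.rev ⟨b, hab.2⟩) (Fin.rev ⟨a, hab.1⟩) (Set.notMem_empty _)
      rw [congMap_snd_rev_apply] at h
      simpa [natEntry, hab, eq_neg_iff_add_eq_zero] using h
    · simp [natEntry, hab, show ¬(b < n ∧ a < n) by tauto]
  · have h := hfst (Fin.rev ⟨b, hb⟩) (Fin.rev ⟨a, ha⟩) (by simp [bandSet, Fin.val_rev]; omega)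
    rwa [congMap_fst_rev_apply] at h

theorem eq_zero_of_congMap_mem_pattern {n : ℕ} {C : Matrix (Fin n) (Fin n) ℂ}
    (hC : congMap (lamM n 0) (delM n) C ∈ Pattern (bandSet n) ∅) : C = 0 := by
  ext i j
  have h := (skewLinked_of_congMap_mem_pattern hC).eq_zero i j.rev
  rwa [natEntry_val, submatrix_apply, id_eq, Fin.rev_rev] at h

theorem TSpace_le_SymPair {ι : Type} [Fintype ι] {A B : Matrix ι ι ℂ} (hA : A.IsSymm)
    (hB : B.IsSymm) : TSpace A B ≤ SymPair ι := by
  rintro _ ⟨C, rfl⟩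
  have key : ∀ M : Matrix ι ι ℂ, M.IsSymm → (Cᵀ * M + M * C).IsSymm := fun M hM => by
    rw [IsSymm, transpose_add, transpose_mul, transpose_mul, transpose_transpose, hM.eq, add_comm]
  exact ⟨key A hA, key B hB⟩

section Sym2

variable (R ι : Type*) [CommSemiring R]

def sym2ToMatrix : (Sym2 ι → R) →ₗ[R] Matrix ι ι R where
  toFun f := of fun i j => f s(i, j)
  map_add' _ _ := rfl
  map_smul' _ _ := rfl

variable {R ι}

theorem sym2ToMatrix_apply (f : Sym2 ι → R) (i j : ι) : sym2ToMatrix R ι f i j = f s(i, j) :=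
  rfl

theorem sym2ToMatrix_injective : Function.Injective (sym2ToMatrix R ι) := by
  intro f g h
  funext z
  induction z using Sym2.ind with
  | _ i j => exact congrFun (congrFun h i) j

theorem mem_range_sym2ToMatrix_iff {X : Matrix ι ι R} :
    X ∈ LinearMap.range (sym2ToMatrix R ι) ↔ X.IsSymm := by
  constructor
  · rintro ⟨f, rfl⟩
    ext i j
    simp only [transpose_apply, sym2ToMatrix_apply, Sym2.eq_swap]
  · intro hX
    refine ⟨Sym2.lift ⟨fun i j => X i j, fun i j => hX.apply j i⟩, ?_⟩
    ext i j
    rw [sym2ToMatrix_apply, Sym2.lift_mk]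

end Sym2

theorem finrank_SymPair (ι : Type) [Fintype ι] :
    finrank ℂ (SymPair ι) = Fintype.card ι * (Fintype.card ι + 1) := by
  classical
  have hrange : SymPair ι =
      LinearMap.range ((sym2ToMatrix ℂ ι).prodMap (sym2ToMatrix ℂ ι)) := by
    ext p
    rw [LinearMap.range_prodMap, Submodule.mem_prod, mem_range_sym2ToMatrix_iff,
      mem_range_sym2ToMatrix_iff]
    rfl
  rw [hrange, LinearMap.finrank_range_of_inj
      (sym2ToMatrix_injective.prodMap sym2ToMatrix_injective),
    finrank_prod, finrank_fintype_fun_eq_card, Sym2.card, Nat.choose_two_right,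
    Nat.add_sub_cancel, ← two_mul, Nat.mul_comm (Fintype.card ι + 1),
    Nat.two_mul_div_two_of_even (Nat.even_mul_succ_self _)]

def bandMatrix (R : Type*) [Semiring R] (n : ℕ) :
    (Fin n → R) →ₗ[R] Matrix (Fin n) (Fin n) R where
  toFun c := of fun i j =>
    if h : (i : ℕ) + j < n ∧ (i : ℕ) ≤ j + 1 ∧ (j : ℕ) ≤ i + 1 then c ⟨i + j, h.1⟩ else 0
  map_add' c c' := by
    ext i j
    simp only [of_apply, Pi.add_apply, Matrix.add_apply]
    split_ifs <;> simp
  map_smul' a c := by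
    ext i j
    simp only [of_apply, Pi.smul_apply, Matrix.smul_apply, RingHom.id_apply]
    split_ifs <;> simp

section Band

variable {R : Type*} [Semiring R] {n : ℕ}

theorem bandMatrix_apply_half (c : Fin n → R) (s : Fin n) :
    bandMatrix R n c ⟨s / 2, by omega⟩ ⟨(s + 1) / 2, by omega⟩ = c s := by
  simp only [bandMatrix, LinearMap.coe_mk, AddHom.coe_mk, of_apply]
  rw [dif_pos (by omega)]
  congr
  omega

theorem bandMatrix_injective : Function.Injective (bandMatrix R n) := by
  intro c c' h
  funext s
  rw [← bandMatrix_apply_half c s, ← bandMatrix_apply_half c' s, h]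

end Band

theorem bandMatrix_mem_pattern {n : ℕ} (c : Fin n → ℂ) :
    (bandMatrix ℂ n c, 0) ∈ Pattern (bandSet n) ∅ := by
  refine ⟨?_, isSymm_zero, fun i j hij => ?_, fun _ _ _ => rfl⟩
  · ext i j
    simp only [bandMatrix, LinearMap.coe_mk, AddHom.coe_mk, transpose_apply, of_apply]
    by_cases h : (j : ℕ) + i < n ∧ (j : ℕ) ≤ i + 1 ∧ (i : ℕ) ≤ j + 1
    · rw [dif_pos h, dif_pos (by omega)]
      congr 2
      omega
    · rw [dif_neg h, dif_neg (by omega)]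
  · simp only [bandSet, Set.mem_ofPred_eq] at hij
    simp only [bandMatrix, LinearMap.coe_mk, AddHom.coe_mk, of_apply]
    rw [dif_neg (by omega)]

theorem le_finrank_pattern (n : ℕ) : n ≤ finrank ℂ (Pattern (bandSet n) ∅) := by
  calc n = finrank ℂ (LinearMap.range (LinearMap.inl ℂ _ _ ∘ₗ bandMatrix ℂ n)) := by
        rw [LinearMap.finrank_range_of_inj (f := LinearMap.inl ℂ _ _ ∘ₗ bandMatrix ℂ n)
          (LinearMap.inl_injective.comp bandMatrix_injective),
          finrank_fin_fun]
    _ ≤ _ := Submodule.finrank_mono <| by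
        rintro _ ⟨c, rfl⟩
        exact bandMatrix_mem_pattern c

theorem K_diagonal_block_general (n : ℕ) :
    Disjoint (TSpace (lamM n 0) (delM n))
      (Pattern
        {pq : Fin n × Fin n | ((pq.1 : ℕ) ≤ (pq.2 : ℕ) + 1 ∧ (pq.2 : ℕ) ≤ (pq.1 : ℕ) + 1) ∧
          (pq.1 : ℕ) + 1 + ((pq.2 : ℕ) + 1) ≤ n + 1}
        (∅ : Set (Fin n × Fin n))) ∧
    TSpace (lamM n 0) (delM n) ⊔
      Pattern
        {pq : Fin n × Fin n | ((pq.1 : ℕ) ≤ (pq.2 : ℕ) + 1 ∧ (pq.2 : ℕ) ≤ (pq.1 : ℕ) + 1) ∧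
          (pq.1 : ℕ) + 1 + ((pq.2 : ℕ) + 1) ≤ n + 1}
        (∅ : Set (Fin n × Fin n)) = SymPair (Fin n) := by
  have hdisj : Disjoint (TSpace (lamM n 0) (delM n)) (Pattern (bandSet n) ∅) := by
    rw [Submodule.disjoint_def]
    rintro _ ⟨C, rfl⟩ hC
    rw [eq_zero_of_congMap_mem_pattern hC, map_zero]
  have hT : finrank ℂ (TSpace (lamM n 0) (delM n)) = n * n := by
    rw [TSpace, LinearMap.finrank_range_of_inj ((injective_iff_map_eq_zero _).2 fun C hC =>
        eq_zero_of_congMap_mem_pattern (hC ▸ zero_mem _)),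
      finrank_matrix, Fintype.card_fin, finrank_self, Nat.mul_one]
  have hsum := Submodule.finrank_sup_add_finrank_inf_eq (TSpace (lamM n 0) (delM n))
    (Pattern (bandSet n) ∅)
  rw [hdisj.eq_bot, finrank_bot, hT] at hsum
  have hrank : finrank ℂ (SymPair (Fin n)) ≤
      finrank ℂ ↥(TSpace (lamM n 0) (delM n) ⊔ Pattern (bandSet n) ∅) := by
    rw [finrank_SymPair, Fintype.card_fin, Nat.mul_succ]
    have := le_finrank_pattern n
    omega
  exact ⟨hdisj, Submodule.eq_of_le_of_finrank_le
    (sup_le (TSpace_le_SymPair (lamM_isSymm n 0) (delM_isSymm n)) (Pattern_le _ _)) hrank⟩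

/-- **Diagonal block `K_n`.** `Sym × Sym = T(Λ_n(0), Δ_n) ⊕ P`, where `P` consists of
pairs `(X, 0)` with `X` symmetric and `X i j = 0` whenever `|i − j| > 1` or
`i + j > n + 1`. -/
theorem K_diagonal_block (n : ℕ) (hn : 0 < n) :
    Disjoint (TSpace (lamM n 0) (delM n))
      (Pattern
        {pq : Fin n × Fin n | ((pq.1 : ℕ) ≤ (pq.2 : ℕ) + 1 ∧ (pq.2 : ℕ) ≤ (pq.1 : ℕ) + 1) ∧
          (pq.1 : ℕ) + 1 + ((pq.2 : ℕ) + 1) ≤ n + 1}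
        (∅ : Set (Fin n × Fin n))) ∧
    TSpace (lamM n 0) (delM n) ⊔
      Pattern
        {pq : Fin n × Fin n | ((pq.1 : ℕ) ≤ (pq.2 : ℕ) + 1 ∧ (pq.2 : ℕ) ≤ (pq.1 : ℕ) + 1) ∧
          (pq.1 : ℕ) + 1 + ((pq.2 : ℕ) + 1) ≤ n + 1}
        (∅ : Set (Fin n × Fin n)) = SymPair (Fin n) :=
  K_diagonal_block_general n
end

section
/- Let n, m be positive integers and λ, μ ∈ ℂ with λ ≠ μ. Then the linear map (S,R) ↦ (R^T Δ_m + Δ_n S, R^T Λ_m(μ) + Λ_n(λ) S), from ℂ^{n×m} × ℂ^{m×n} to ℂ^{n×m} × ℂ^{n×m}, is surjective; i.e., every pair (A,B) of n×m complex matrices can be written as A = R^T Δ_m + Δ_n S and B = R^T Λ_m(μ) + Λ_n(λ) S for some S ∈ ℂ^{n×m} and R ∈ ℂ^{m×n}. -/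
open Matrix

/-! Put `Rᵀ = U Δ_m` and `S = Δ_n (A - U)`. As `Δ² = 1`, the first equation holds for every
`U`, and the second becomes the Sylvester equation `U M - L U = B - L A` with `M = Δ_m Λ_m(μ)`
upper triangular with diagonal `μ` and `L = Λ_n(λ) Δ_n` lower triangular with diagonal `λ`.
If `U M = L U` then `χ_M(L) U = U χ_M(M) = 0` by Cayley–Hamilton, and `χ_M(L) = (L - μ)^m` is
invertible because `λ ≠ μ`; so the Sylvester operator `U ↦ U M - L U` is injective, hence
surjective. -/

noncomputable section

open Polynomial

namespace Matrix

variable {ι κ : Type*} [Fintype ι] [Fintype κ] [DecidableEq ι] [DecidableEq κ]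

theorem mul_aeval_eq_aeval_mul_of_mul_eq_mul {R : Type*} [CommRing R] {L : Matrix ι ι R}
    {M : Matrix κ κ R} {U : Matrix ι κ R} (hU : U * M = L * U) (p : R[X]) :
    U * aeval M p = aeval L p * U := by
  have hpow : ∀ k : ℕ, U * M ^ k = L ^ k * U := fun k => by
    induction k with
    | zero => simp
    | succ k ih => rw [pow_succ, ← Matrix.mul_assoc, ih, Matrix.mul_assoc, hU,
        ← Matrix.mul_assoc, ← pow_succ]
  induction p using Polynomial.induction_on' with
  | add p q hp hq => rw [map_add, map_add, Matrix.mul_add, Matrix.add_mul, hp, hq]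
  | monomial k a => simp only [aeval_monomial, Algebra.algebraMap_eq_smul_one, smul_mul,
      Matrix.one_mul, Matrix.mul_smul, hpow]

theorem eq_zero_of_mul_eq_mul_of_isUnit_aeval_charpoly {R : Type*} [CommRing R]
    {L : Matrix ι ι R} {M : Matrix κ κ R} {U : Matrix ι κ R} (hU : U * M = L * U)
    (hLM : IsUnit (aeval L M.charpoly)) : U = 0 := by
  have := hLM.invertible
  apply mul_right_injective_of_invertible (aeval L M.charpoly)
  simp only [← mul_aeval_eq_aeval_mul_of_mul_eq_mul hU, aeval_self_charpoly, Matrix.mul_zero]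

theorem exists_mul_sub_mul_eq_of_isUnit_aeval_charpoly {K : Type*} [Field K]
    {L : Matrix ι ι K} {M : Matrix κ κ K} (hLM : IsUnit (aeval L M.charpoly))
    (C : Matrix ι κ K) : ∃ U : Matrix ι κ K, U * M - L * U = C := by
  let T := mulRightLinearMap ι K M - mulLeftLinearMap κ K L
  have hT : Function.Injective T := by
    rw [← LinearMap.ker_eq_bot, LinearMap.ker_eq_bot']
    exact fun U hU => eq_zero_of_mul_eq_mul_of_isUnit_aeval_charpoly (sub_eq_zero.mp hU) hLM
  exact LinearMap.injective_iff_surjective.mp hT C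

end Matrix

theorem delM_eq_submatrix (k : ℕ) :
    delM k = (1 : Matrix (Fin k) (Fin k) ℂ).submatrix Fin.rev id := by
  ext i j
  have := i.isLt
  simp only [delM, of_apply, submatrix_apply, one_apply, id, Fin.ext_iff, Fin.val_rev]
  split_ifs <;> first | rfl | omega

theorem delM_mul {α : Type*} (k : ℕ) (X : Matrix (Fin k) α ℂ) :
    delM k * X = X.submatrix Fin.rev id := by
  ext i j
  simp [delM_eq_submatrix, mul_apply, one_apply]

theorem mul_delM {α : Type*} (k : ℕ) (X : Matrix α (Fin k) ℂ) :
    X * delM k = X.submatrix id Fin.rev := by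
  rw [← transpose_transpose (X * delM k), transpose_mul, (delM_isSymm k).eq, delM_mul]
  rfl

theorem delM_mul_delM (k : ℕ) : delM k * delM k = 1 := by
  rw [delM_mul, delM_eq_submatrix, submatrix_submatrix, Fin.rev_involutive.comp_self,
    Function.comp_id, submatrix_id_id]

theorem delM_mul_lamM_apply (k : ℕ) (mu : ℂ) (i j : Fin k) :
    (delM k * lamM k mu) i j = if j = i then mu else if (j : ℕ) = i + 1 then 1 else 0 := by
  have := i.isLt
  simp only [delM_mul, submatrix_apply, id, lamM, of_apply, Fin.val_rev, Fin.ext_iff]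
  split_ifs <;> first | rfl | omega

theorem lamM_mul_delM_apply (k : ℕ) (lam : ℂ) (i j : Fin k) :
    (lamM k lam * delM k) i j = if i = j then lam else if (i : ℕ) = j + 1 then 1 else 0 := by
  have := j.isLt
  simp only [mul_delM, submatrix_apply, id, lamM, of_apply, Fin.val_rev, Fin.ext_iff]
  split_ifs <;> first | rfl | omega

theorem charpoly_delM_mul_lamM (k : ℕ) (mu : ℂ) :
    (delM k * lamM k mu).charpoly = (X - C mu) ^ k := by
  rw [charpoly_of_isUpperTriangular]
  · simp [delM_mul_lamM_apply]
  · intro i j hji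
    have : (j : ℕ) < i := hji
    rw [delM_mul_lamM_apply, if_neg (by omega), if_neg (by omega)]

theorem isUnit_lamM_mul_delM_sub_algebraMap (k : ℕ) {lam mu : ℂ} (hlm : lam ≠ mu) :
    IsUnit (lamM k lam * delM k - algebraMap ℂ _ mu) := by
  rw [isUnit_iff_isUnit_det, det_of_isLowerTriangular]
  · simp [lamM_mul_delM_apply, algebraMap_matrix_apply, sub_ne_zero.mpr hlm]
  · intro i j hij
    have : (i : ℕ) < j := hij
    simp [lamM_mul_delM_apply, algebraMap_matrix_apply, show i ≠ j by omega,
      show (i : ℕ) ≠ j + 1 by omega]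

theorem H_offdiagonal_distinct_eigenvalues_general (n m : ℕ)
    (lam mu : ℂ) (hlm : lam ≠ mu) (A B : Matrix (Fin n) (Fin m) ℂ) :
    ∃ (S : Matrix (Fin n) (Fin m) ℂ) (R : Matrix (Fin m) (Fin n) ℂ),
      A = Rᵀ * delM m + delM n * S ∧ B = Rᵀ * lamM m mu + lamM n lam * S := by
  have hLM : IsUnit (aeval (lamM n lam * delM n) (delM m * lamM m mu).charpoly) := by
    rw [charpoly_delM_mul_lamM, map_pow, map_sub, aeval_X, aeval_C]
    exact (isUnit_lamM_mul_delM_sub_algebraMap n hlm).pow m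
  obtain ⟨U, hU⟩ := exists_mul_sub_mul_eq_of_isUnit_aeval_charpoly hLM
    (B - lamM n lam * delM n * A)
  refine ⟨delM n * (A - U), (U * delM m)ᵀ, ?_, ?_⟩
  · rw [transpose_transpose, Matrix.mul_assoc, delM_mul_delM, ← Matrix.mul_assoc,
      delM_mul_delM, Matrix.mul_one, Matrix.one_mul, add_sub_cancel]
  · rw [eq_sub_iff_add_eq] at hU
    rw [transpose_transpose, Matrix.mul_assoc, ← Matrix.mul_assoc (lamM n lam), Matrix.mul_sub,
      ← hU]
    abel

/-- **Off-diagonal blocks `H_n(λ)` vs `H_m(μ)`, `λ ≠ μ`.** The map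
`(S, R) ↦ (Rᵀ Δ_m + Δ_n S, Rᵀ Λ_m(μ) + Λ_n(λ) S)` is surjective onto pairs of `n × m`
complex matrices. -/
theorem H_offdiagonal_distinct_eigenvalues (n m : ℕ) (hn : 0 < n) (hm : 0 < m)
    (lam mu : ℂ) (hlm : lam ≠ mu) (A B : Matrix (Fin n) (Fin m) ℂ) :
    ∃ (S : Matrix (Fin n) (Fin m) ℂ) (R : Matrix (Fin m) (Fin n) ℂ),
      A = Rᵀ * delM m + delM n * S ∧ B = Rᵀ * lamM m mu + lamM n lam * S :=
  H_offdiagonal_distinct_eigenvalues_general n m lam mu hlm A B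

end
end
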